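/- There is no function dinv : Sch_{2,1}^2 → ℕ and no integer w such that the two-variable polynomial S(q,t) = Σ_{α ∈ Sch_{2,1}^2} q^{aire(α)}·t^{dinv(α)} is symmetric in q and t (i.e. S(q,t) = S(t,q)) and simultaneously q^w · Σ_{α ∈ Sch_{2,1}^2} q^{aire(α) − dinv(α)} = 1 + q + q² + q³ in ℤ[q, q⁻¹]. In particular, there is no definition of a dinv statistic on r-Schröder paths making S_{n,d}^r(q,t) symmetric with the desired q-specialization for all r. -/

import Mathlib

/-- Steps of an `r`-Schröder path: down `(0,-1)`, right `(1,0)`, diagonal `(r,-1)`. -/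
inductive SStep : Type
  | down | right | diag
deriving DecidableEq

/-- Displacement of a step for slope parameter `r`. -/
def sDisp (r : ℤ) : SStep → ℤ × ℤ
  | .down => (0, -1)
  | .right => (1, 0)
  | .diag => (r, -1)

/-- Position reached after performing the steps `l`, starting at `(0, n)`. -/
def sPos (r n : ℤ) (l : List SStep) : ℤ × ℤ :=
  l.foldl (fun p s => p + sDisp r s) (0, n)

/-- `α` is an `r`-Schröder path of size `n`: it goes from `(0,n)` to `(r*n, 0)` and never
passes strictly above the line segment joining `(0,n)` and `(r*n,0)`
(the segment lies on the line `x + r*y = r*n`). -/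
def IsSchroder (r n : ℕ) (α : List SStep) : Prop :=
  sPos r n α = ((r : ℤ) * n, 0) ∧
  ∀ β, β <+: α → (sPos r n β).1 + (r : ℤ) * (sPos r n β).2 ≤ (r : ℤ) * n

/-- `Sch r n d` : the set of `r`-Schröder paths of size `n` with exactly `n - d`
diagonal steps. -/
def Sch (r n d : ℕ) : Set (List SStep) :=
  {α | IsSchroder r n α ∧ α.count SStep.diag = n - d}


/-- The left-area code of a path: scanning the steps with current `x`-coordinate,
each down step contributes the entry `(x, false)` and each diagonal step contributes
`(x, true)`; right steps contribute nothing. -/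
def sCode (r : ℤ) : ℤ → List SStep → List (ℤ × Bool)
  | _, [] => []
  | x, .down :: t => (x, false) :: sCode r x t
  | x, .right :: t => sCode r (x + 1) t
  | x, .diag :: t => (x, true) :: sCode r (x + r) t

/-- The area of a path: `aire(α) = ∑_{i=1}^{n} (r*(i-1) - a_i)`, where `a_i` is the
left area of row `i`; this counts the cells between the path and the boundary line. -/
def aire (r : ℕ) (α : List SStep) : ℤ :=
  ∑ i ∈ Finset.range ((sCode r 0 α).length),
    ((r : ℤ) * i - (((sCode r 0 α).map Prod.fst).getD i 0))

/-!
The four paths of `Sch_{2,1}^2` have areas `0, 0, 1, 2`. Symmetry of `S(q,t)` forces the dinv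
values to have the same sum as the areas, namely `3`: differentiate `S(q,1) = S(1,q)` at
`q = 1`. Summing the exponents of the `q`-specialization then gives `4w + 3 - 3 = 0+1+2+3`,
which has no integer solution `w`.
-/

open Polynomial in
theorem Polynomial.eval_one_derivative_sum_X_pow {R ι : Type*} [Semiring R] (s : Finset ι)
    (f : ι → ℕ) : (derivative (∑ i ∈ s, X ^ f i : R[X])).eval 1 = ∑ i ∈ s, (f i : R) := by
  simp [derivative_X_pow, eval_finsetSum]

open Polynomial in
theorem MvPolynomial.sum_eq_sum_of_rename_swap_eq {R ι : Type*} [CommSemiring R] [CharZero R]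
    (s : Finset ι) (f g : ι → ℕ)
    (h : rename (Equiv.swap (0 : Fin 2) 1)
        (∑ i ∈ s, X 0 ^ f i * X 1 ^ g i : MvPolynomial (Fin 2) R) =
          ∑ i ∈ s, X 0 ^ f i * X 1 ^ g i) :
    ∑ i ∈ s, f i = ∑ i ∈ s, g i := by
  have h1 := congrArg (aeval ![(1 : R[X]), Polynomial.X]) h
  simp only [aeval_rename, map_sum, map_mul, map_pow, aeval_X, Function.comp_apply,
    Equiv.swap_apply_left, Equiv.swap_apply_right, Matrix.cons_val_zero, Matrix.cons_val_one,
    one_pow, one_mul, mul_one] at h1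
  have h2 := congrArg (fun p : R[X] => (derivative p).eval 1) h1
  simp only [Polynomial.eval_one_derivative_sum_X_pow] at h2
  exact_mod_cast h2

namespace LaurentPolynomial

variable {R : Type*} [Ring R]

/-- The derivative at `T = 1`. -/
noncomputable def exponentSum : R[T;T⁻¹] →+ R :=
  (Finsupp.liftAddHom fun n : ℤ => AddMonoidHom.mulRight (n : R)).comp
    AddMonoidAlgebra.coeffAddEquiv.toAddMonoidHom

@[simp]
theorem exponentSum_T (n : ℤ) : exponentSum (T n : R[T;T⁻¹]) = n := by
  show Finsupp.liftAddHom (fun n : ℤ => AddMonoidHom.mulRight (n : R)) (Finsupp.single n 1) = n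
  rw [Finsupp.liftAddHom_apply_single, AddMonoidHom.mulRight_apply, one_mul]

@[simp]
theorem exponentSum_one : exponentSum (1 : R[T;T⁻¹]) = 0 := by
  rw [← T_zero, exponentSum_T, Int.cast_zero]

end LaurentPolynomial

namespace SStep

instance : Fintype SStep :=
  ⟨{down, right, diag}, fun s => by cases s <;> decide⟩

end SStep

open SStep

theorem sPos_eq (r n : ℤ) (l : List SStep) :
    sPos r n l = ((l.count right : ℤ) + r * l.count diag, n - l.count down - l.count diag) := by
  suffices ∀ p : ℤ × ℤ, l.foldl (fun p s => p + sDisp r s) p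
      = p + ((l.count right : ℤ) + r * l.count diag, -(l.count down : ℤ) - l.count diag) by
    rw [sPos, this]
    ext <;> simp only [Prod.fst_add, Prod.snd_add] <;> ring
  induction l with
  | nil => simp
  | cons s t ih =>
    intro p
    rw [List.foldl_cons, ih]
    cases s <;> ext <;> simp [sDisp] <;> ring

theorem length_eq_count_add (l : List SStep) :
    l.length = l.count down + l.count right + l.count diag := by
  induction l with
  | nil => rfl
  | cons s t ih => cases s <;> simp [ih] <;> omega

theorem IsSchroder.length_add_mul_count_diag {r n : ℕ} {α : List SStep} (h : IsSchroder r n α) :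
    α.length + r * α.count diag = n + r * n := by
  have hend := h.1
  rw [sPos_eq, Prod.ext_iff] at hend
  obtain ⟨hx, hy⟩ := hend
  rw [length_eq_count_add]
  zify
  linarith

theorem isSchroder_iff_inits {r n : ℕ} {α : List SStep} :
    IsSchroder r n α ↔ sPos r n α = ((r : ℤ) * n, 0) ∧
      ∀ β ∈ α.inits, (sPos r n β).1 + (r : ℤ) * (sPos r n β).2 ≤ (r : ℤ) * n := by
  simp only [IsSchroder, List.mem_inits]

instance (r n d : ℕ) : DecidablePred (· ∈ Sch r n d) := fun _ =>
  decidable_of_iff' _ (and_congr_left' isSchroder_iff_inits)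

def schTwoTwoOne : Finset (List SStep) :=
  {[diag, down, right, right], [down, diag, right, right], [down, right, diag, right],
    [down, right, right, diag]}

theorem coe_schTwoTwoOne : (schTwoTwoOne : Set (List SStep)) = Sch 2 2 1 := by
  ext α
  constructor
  · rw [Finset.mem_coe]
    revert α
    decide
  · intro h
    have hlen : α.length = 4 := by
      have := h.1.length_add_mul_count_diag
      rw [h.2] at this
      omega
    match α, hlen with
    | [a, b, c, d], _ => revert a b c d h; decide

theorem card_schTwoTwoOne : schTwoTwoOne.card = 4 := rfl

theorem sum_aire_schTwoTwoOne : ∑ α ∈ schTwoTwoOne, aire 2 α = 3 := by decide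

theorem sum_toNat_aire_schTwoTwoOne : ∑ α ∈ schTwoTwoOne, (aire 2 α).toNat = 3 := by decide

open LaurentPolynomial in
/-- There is no inversion statistic `dinv` on `Sch_{2,1}^2` and integer `w` such that the
polynomial `S(q,t) = ∑_{α ∈ Sch_{2,1}^2} q^(aire α) t^(dinv α)` is symmetric in `q`, `t`
and simultaneously `q^w ⬝ ∑_{α} q^(aire α - dinv α) = 1 + q + q² + q³` in `ℤ[q,q⁻¹]`. -/
theorem no_symmetric_dinv (s : Finset (List SStep))
    (hs : (↑s : Set (List SStep)) = Sch 2 2 1) :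
    ¬ ∃ (dinv : List SStep → ℕ) (w : ℤ),
        (MvPolynomial.rename ⇑(Equiv.swap (0 : Fin 2) 1))
            (∑ α ∈ s, MvPolynomial.X 0 ^ (aire 2 α).toNat * MvPolynomial.X 1 ^ dinv α
              : MvPolynomial (Fin 2) ℤ)
          = ∑ α ∈ s, MvPolynomial.X 0 ^ (aire 2 α).toNat * MvPolynomial.X 1 ^ dinv α ∧
        (∑ α ∈ s, (T (w + aire 2 α - (dinv α : ℤ)) : LaurentPolynomial ℤ))
          = 1 + T 1 + T 2 + T 3 := by
  obtain rfl := Finset.coe_injective (hs.trans coe_schTwoTwoOne.symm)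
  rintro ⟨dinv, w, hsymm, hspec⟩
  have hdinv := MvPolynomial.sum_eq_sum_of_rename_swap_eq _ _ _ hsymm
  have hexp := congrArg exponentSum hspec
  simp only [map_add, map_sum, exponentSum_T, exponentSum_one, Int.cast_id,
    Finset.sum_sub_distrib, Finset.sum_add_distrib, Finset.sum_const, nsmul_eq_mul] at hexp
  rw [← Nat.cast_sum, ← hdinv, card_schTwoTwoOne, sum_aire_schTwoTwoOne,
    sum_toNat_aire_schTwoTwoOne] at hexp
  omega
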